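/- In ℝ² with φ(ξ,η) = ψ(ξ,η) = |ξ| + |η| and L > 1, let E_L = ([−1,1]×[−L,L]) ∪ ([−L,L]×[−1,1]). The vector field z(x,y) equal to (x,y) on [−1,1]², to (x, ±1) for |x| ≤ 1, 1 ≤ ±y ≤ L, and to (±1, y) for 1 ≤ ±x ≤ L, |y| ≤ 1, satisfies on E_L: (i) z takes values in the unit ball {ψ° ≤ 1} = [−1,1]² of ψ°, (ii) div z = 1 + χ_{[−1,1]²} in the interior of each region, and (iii) for every 1 ≤ ℓ ≤ L, the anisotropic perimeter satisfies P_φ(E_ℓ) = ∫_{∂E_ℓ} z·ν dH¹. -/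

import Mathlib

open MeasureTheory Set Filter Metric
open scoped Pointwise RealInnerProductSpace ENNReal Topology

noncomputable section

/-- `V d` is Euclidean `d`-space. -/
abbrev V (d : ℕ) := EuclideanSpace ℝ (Fin d)

/-- Divergence of a vector field on `V d`. -/
def dvg {d : ℕ} (z : V d → V d) (x : V d) : ℝ :=
  ∑ i, fderiv ℝ z x (EuclideanSpace.single i 1) i

/-- Candidate values, via admissible dual test fields, for the anisotropic total
variation `∫_Ω φ(−Du)` (dual/De Giorgi definition). -/
def tvSet {d : ℕ} (φ : V d → ℝ) (Ω : Set (V d)) (u : V d → ℝ) : Set ℝ :=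
  {r | ∃ z : V d → V d, ContDiff ℝ 1 z ∧ HasCompactSupport z ∧ tsupport z ⊆ Ω ∧
    (∀ x v, ⟪z x, v⟫ ≤ φ v) ∧ r = ∫ x in Ω, u x * dvg z x}

/-- Anisotropic total variation `∫_Ω φ(−Du)`. -/
def anisoTV {d : ℕ} (φ : V d → ℝ) (Ω : Set (V d)) (u : V d → ℝ) : ℝ := sSup (tvSet φ Ω u)

/-- `u` has bounded anisotropic variation in `Ω` (i.e. `u ∈ BV`). -/
def HasBoundedTV {d : ℕ} (φ : V d → ℝ) (Ω : Set (V d)) (u : V d → ℝ) : Prop :=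
  BddAbove (tvSet φ Ω u)

/-- Anisotropic perimeter `P_φ(E)` (relative to `Ω`). -/
def anisoPer {d : ℕ} (φ : V d → ℝ) (Ω E : Set (V d)) : ℝ := anisoTV φ Ω (E.indicator 1)

/-- `E` has finite anisotropic perimeter. -/
def FinPer {d : ℕ} (φ : V d → ℝ) (Ω E : Set (V d)) : Prop := HasBoundedTV φ Ω (E.indicator 1)

/-- `F ⊂⊂ Ω` : compactly contained. -/
def CpctIn {d : ℕ} (F Ω : Set (V d)) : Prop := IsCompact (closure F) ∧ closure F ⊆ Ω

/-- Signed anisotropic distance to `E` w.r.t. the (possibly non-symmetric) anisotropy `ψ`. -/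
def sdist {d : ℕ} (ψ : V d → ℝ) (E : Set (V d)) (x : V d) : ℝ :=
  sInf ((fun y => ψ (x - y)) '' E) - sInf ((fun y => ψ (y - x)) '' Eᶜ)

/-- Strong outward minimality condition `(MC_δ)` for `E` in `Ω`. -/
def MCd {d : ℕ} (φ : V d → ℝ) (Ω : Set (V d)) (δ : ℝ) (E : Set (V d)) : Prop :=
  ∀ F : Set (V d), CpctIn F Ω → FinPer φ univ F →
    anisoPer φ univ (E ∩ F) ≤ anisoPer φ univ F - δ * (volume (F \ E)).toReal

/-- The Almgren–Taylor–Wang functional. -/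
def ATWfun {d : ℕ} (φ ψ : V d → ℝ) (E : Set (V d)) (h : ℝ) (F : Set (V d)) : ℝ :=
  anisoPer φ univ F + (1 / h) * ∫ x in F, sdist ψ E x

/-- `G` is a minimizer of the ATW functional with datum `E` and time step `h`. -/
def IsATWmin {d : ℕ} (φ ψ : V d → ℝ) (E : Set (V d)) (h : ℝ) (G : Set (V d)) : Prop :=
  FinPer φ univ G ∧ ∀ F, FinPer φ univ F → ATWfun φ ψ E h G ≤ ATWfun φ ψ E h F

/-- `φ` is an admissible anisotropy: convex, positively one-homogeneous,
positive away from `0`. -/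
def Anisotropy {d : ℕ} (φ : V d → ℝ) : Prop :=
  ConvexOn ℝ univ φ ∧ (∀ c : ℝ, 0 ≤ c → ∀ v, φ (c • v) = c * φ v) ∧ ∀ v : V d, v ≠ 0 → 0 < φ v

/-- `u` is `φ`-1-superharmonic in `Ω`. -/
def OneSH {d : ℕ} (φ : V d → ℝ) (Ω : Set (V d)) (u : V d → ℝ) : Prop :=
  ∀ v : V d → ℝ, (∀ x, u x ≤ v x) → HasCompactSupport v → tsupport v ⊆ Ω →
    HasBoundedTV φ Ω v → anisoTV φ Ω u ≤ anisoTV φ Ω v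

/-- `u` is `(φ,δ)`-1-superharmonic in `Ω`. -/
def OneSHd {d : ℕ} (φ : V d → ℝ) (Ω : Set (V d)) (δ : ℝ) (u : V d → ℝ) : Prop :=
  ∀ v : V d → ℝ, HasCompactSupport v → tsupport v ⊆ Ω → HasBoundedTV φ Ω v →
    anisoTV φ Ω (fun x => min (u x) (v x)) ≤ anisoTV φ Ω v - δ * ∫ x in Ω, max (v x - u x) 0
/-- The cross-shaped set `E_ℓ = ([−1,1]×[−ℓ,ℓ]) ∪ ([−ℓ,ℓ]×[−1,1])`. -/
def cross (ℓ : ℝ) : Set (V 2) :=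
  {p : V 2 | (|p 0| ≤ 1 ∧ |p 1| ≤ ℓ) ∨ (|p 0| ≤ ℓ ∧ |p 1| ≤ 1)}

/-- Clamp to `[−1,1]`. -/
def clamp (t : ℝ) : ℝ := max (-1) (min 1 t)

/-- The calibration field of the cross: `(x,y)` on `[−1,1]²`, `(x, ±1)` and
`(±1, y)` on the arms; globally it is the coordinatewise clamp. -/
def zfield : V 2 → V 2 := fun p => WithLp.toLp 2 (fun i => clamp (p i))

/-- The crystalline anisotropy `φ(ξ,η) = |ξ| + |η|` (the `ℓ¹` norm). -/
def phi1 : V 2 → ℝ := fun p => |p 0| + |p 1|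

/-!
With `φ` the `ℓ¹` norm, the admissible test fields in the dual definition of `P_φ` are the
`C¹` compactly supported fields with `|z_i| ≤ 1`. Cutting `E_ℓ` into three rectangles, the
divergence theorem turns `∫_{E_ℓ} div z` into the flux of `z` through the twelve edges of
`∂E_ℓ`, which is at most their total length `8ℓ`; a smoothing of the clamp field, cut off far
from `E_ℓ`, points along the outward normal on every edge and attains `8ℓ`. On the other hand
`div z = χ_{|x|<1} + χ_{|y|<1}` off four lines, so `∫_{E_ℓ} div z = 2 · 2ℓ + 2ℓ · 2 = 8ℓ` too.
-/

def toV2 : (ℝ × ℝ) ≃L[ℝ] V 2 :=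
  ((EuclideanSpace.equiv (Fin 2) ℝ).trans (ContinuousLinearEquiv.finTwoArrow ℝ ℝ)).symm

@[simp] lemma toV2_apply_zero (q : ℝ × ℝ) : toV2 q 0 = q.1 := rfl
@[simp] lemma toV2_apply_one (q : ℝ × ℝ) : toV2 q 1 = q.2 := rfl

lemma toV2_one_zero : toV2 (1, 0) = EuclideanSpace.single 0 1 := by
  ext i; fin_cases i <;> simp

lemma toV2_zero_one : toV2 (0, 1) = EuclideanSpace.single 1 1 := by
  ext i; fin_cases i <;> simp

lemma measurePreserving_toV2 : MeasurePreserving toV2 volume volume :=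
  (PiLp.volume_preserving_toLp (Fin 2)).comp (volume_preserving_finTwoArrow ℝ).symm

lemma setIntegral_preimage_toV2 (F : V 2 → ℝ) (s : Set (V 2)) :
    ∫ q in toV2 ⁻¹' s, F (toV2 q) = ∫ x in s, F x :=
  measurePreserving_toV2.setIntegral_preimage_emb toV2.toHomeomorph.measurableEmbedding F s

lemma ae_fst_ne (c : ℝ) : ∀ᵐ q : ℝ × ℝ, q.1 ≠ c :=
  Measure.quasiMeasurePreserving_fst.ae (Measure.ae_ne volume c)

lemma ae_snd_ne (c : ℝ) : ∀ᵐ q : ℝ × ℝ, q.2 ≠ c :=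
  Measure.quasiMeasurePreserving_snd.ae (Measure.ae_ne volume c)

lemma continuous_dvg {d : ℕ} {z : V d → V d} (hz : ContDiff ℝ 1 z) : Continuous (dvg z) :=
  continuous_finsetSum _ fun i _ => (EuclideanSpace.proj i).continuous.comp
    ((hz.continuous_fderiv one_ne_zero).clm_apply continuous_const)

def diagField {d : ℕ} (f : ℝ → ℝ) (p : V d) : V d := WithLp.toLp 2 fun i => f (p i)

lemma contDiff_diagField {d : ℕ} {n : WithTop ℕ∞} {f : ℝ → ℝ} (hf : ContDiff ℝ n f) :
    ContDiff ℝ n (diagField f : V d → V d) :=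
  contDiff_euclidean.2 fun i => hf.comp (EuclideanSpace.proj i : V d →L[ℝ] ℝ).contDiff

lemma dvg_diagField {d : ℕ} {f : ℝ → ℝ} {f' : Fin d → ℝ} {p : V d}
    (hf : ∀ i, HasDerivAt f (f' i) (p i)) : dvg (diagField f) p = ∑ i, f' i := by
  have hcoord : ∀ i, HasFDerivAt (fun x : V d => diagField f x i)
      (f' i • (EuclideanSpace.proj i : V d →L[ℝ] ℝ)) p := fun i =>
    (hf i).comp_hasFDerivAt p (EuclideanSpace.proj i : V d →L[ℝ] ℝ).hasFDerivAt
  have hdiff : DifferentiableAt ℝ (diagField f) p :=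
    differentiableAt_euclidean.2 fun i => (hcoord i).differentiableAt
  refine Finset.sum_congr rfl fun i _ => ?_
  have h := ((EuclideanSpace.proj i : V d →L[ℝ] ℝ).hasFDerivAt.comp p hdiff.hasFDerivAt).unique
    (hcoord i)
  simpa using congrArg (fun L : V d →L[ℝ] ℝ => L (EuclideanSpace.single i 1)) h

def hFlux (z : V 2 → V 2) (a b c : ℝ) : ℝ := ∫ x in a..b, z (toV2 (x, c)) 1

def vFlux (z : V 2 → V 2) (c a b : ℝ) : ℝ := ∫ y in a..b, z (toV2 (c, y)) 0

lemma integral_dvg_rectangle {z : V 2 → V 2} (hz : ContDiff ℝ 1 z) {a₁ b₁ a₂ b₂ : ℝ}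
    (h₁ : a₁ ≤ b₁) (h₂ : a₂ ≤ b₂) :
    ∫ q in Icc a₁ b₁ ×ˢ Icc a₂ b₂, dvg z (toV2 q) =
      hFlux z a₁ b₁ b₂ - hFlux z a₁ b₁ a₂ + vFlux z b₁ a₂ b₂ - vFlux z a₁ a₂ b₂ := by
  set D : Fin 2 → ℝ × ℝ → (ℝ × ℝ) →L[ℝ] ℝ := fun i q =>
    (EuclideanSpace.proj i).comp ((fderiv ℝ z (toV2 q)).comp (toV2 : (ℝ × ℝ) →L[ℝ] V 2))
  have hcomp : ∀ i : Fin 2, Continuous fun q : ℝ × ℝ => z (toV2 q) i := fun i =>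
    (EuclideanSpace.proj i).continuous.comp (hz.continuous.comp toV2.continuous)
  have hderiv : ∀ i q, HasFDerivAt (fun q : ℝ × ℝ => z (toV2 q) i) (D i q) q := fun i q =>
    (EuclideanSpace.proj i : V 2 →L[ℝ] ℝ).hasFDerivAt.comp q
      (((hz.differentiable one_ne_zero) _).hasFDerivAt.comp q toV2.hasFDerivAt)
  have hdvg : ∀ q, dvg z (toV2 q) = D 0 q (1, 0) + D 1 q (0, 1) := fun q => by
    simp [D, dvg, Fin.sum_univ_two, toV2_one_zero, toV2_zero_one]
  have hint : IntegrableOn (fun q => D 0 q (1, 0) + D 1 q (0, 1)) (Icc (a₁, a₂) (b₁, b₂)) := by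
    simp_rw [← hdvg]
    exact ((continuous_dvg hz).comp toV2.continuous).continuousOn.integrableOn_compact isCompact_Icc
  simp_rw [hdvg, Icc_prod_Icc]
  exact integral_divergence_prod_Icc_of_hasFDerivAt_off_countable_of_le _ _ _ _ (a₁, a₂) (b₁, b₂)
    ⟨h₁, h₂⟩ ∅ countable_empty (hcomp 0).continuousOn (hcomp 1).continuousOn
    (fun q _ => hderiv 0 q) (fun q _ => hderiv 1 q) hint

lemma abs_hFlux_le {z : V 2 → V 2} (hz : ∀ x i, |z x i| ≤ 1) {a b : ℝ} (hab : a ≤ b) (c : ℝ) :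
    |hFlux z a b c| ≤ b - a := by
  simpa [hFlux, abs_of_nonneg (sub_nonneg.2 hab)] using
    intervalIntegral.norm_integral_le_of_norm_le_const (a := a) (b := b) (C := 1) fun x _ =>
      (hz (toV2 (x, c)) 1).trans_eq' (Real.norm_eq_abs _).symm

lemma abs_vFlux_le {z : V 2 → V 2} (hz : ∀ x i, |z x i| ≤ 1) (c : ℝ) {a b : ℝ} (hab : a ≤ b) :
    |vFlux z c a b| ≤ b - a := by
  simpa [vFlux, abs_of_nonneg (sub_nonneg.2 hab)] using
    intervalIntegral.norm_integral_le_of_norm_le_const (a := a) (b := b) (C := 1) fun y _ =>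
      (hz (toV2 (c, y)) 0).trans_eq' (Real.norm_eq_abs _).symm

lemma hFlux_eq {z : V 2 → V 2} {a b c w : ℝ} (hab : a ≤ b)
    (hz : ∀ x ∈ Icc a b, z (toV2 (x, c)) 1 = w) : hFlux z a b c = (b - a) * w := by
  rw [hFlux, intervalIntegral.integral_congr (g := fun _ => w)
    fun x hx => hz x (uIcc_of_le hab ▸ hx), intervalIntegral.integral_const, smul_eq_mul]

lemma vFlux_eq {z : V 2 → V 2} {a b c w : ℝ} (hab : a ≤ b)
    (hz : ∀ y ∈ Icc a b, z (toV2 (c, y)) 0 = w) : vFlux z c a b = (b - a) * w := by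
  rw [vFlux, intervalIntegral.integral_congr (g := fun _ => w)
    fun y hy => hz y (uIcc_of_le hab ▸ hy), intervalIntegral.integral_const, smul_eq_mul]

lemma measurableSet_cross (ℓ : ℝ) : MeasurableSet (cross ℓ) := by
  unfold cross; measurability

lemma preimage_toV2_cross {ℓ : ℝ} (hℓ : 1 ≤ ℓ) :
    toV2 ⁻¹' cross ℓ = Icc (-1) 1 ×ˢ Icc (-ℓ) ℓ ∪
      (Icc 1 ℓ ×ˢ Icc (-1) 1 ∪ Icc (-ℓ) (-1) ×ˢ Icc (-1) 1) := by
  ext ⟨x, y⟩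
  simp only [cross, mem_preimage, mem_ofPred_eq, toV2_apply_zero, toV2_apply_one, mem_union,
    mem_prod, mem_Icc, abs_le]
  constructor
  · rintro (h | h)
    · exact Or.inl h
    · rcases le_total x (-1) with hx | hx
      · exact Or.inr (Or.inr ⟨⟨h.1.1, hx⟩, h.2⟩)
      rcases le_total x 1 with hx' | hx'
      · exact Or.inl ⟨⟨hx, hx'⟩, by linarith [h.2.1], by linarith [h.2.2]⟩
      · exact Or.inr (Or.inl ⟨⟨hx', h.1.2⟩, h.2⟩)
  · rintro (h | h | h)
    · exact Or.inl h
    · exact Or.inr ⟨⟨by linarith, h.1.2⟩, h.2⟩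
    · exact Or.inr ⟨⟨h.1.1, by linarith⟩, h.2⟩

/-- The boundary integral `∫_{∂E_ℓ} z · ν`, edge by edge. -/
def crossFlux (z : V 2 → V 2) (ℓ : ℝ) : ℝ :=
  (hFlux z (-1) 1 ℓ - hFlux z (-1) 1 (-ℓ)) + (vFlux z ℓ (-1) 1 - vFlux z (-ℓ) (-1) 1)
  + (hFlux z 1 ℓ 1 - hFlux z 1 ℓ (-1)) + (hFlux z (-ℓ) (-1) 1 - hFlux z (-ℓ) (-1) (-1))
  + (vFlux z 1 1 ℓ - vFlux z (-1) 1 ℓ) + (vFlux z 1 (-ℓ) (-1) - vFlux z (-1) (-ℓ) (-1))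

lemma integral_dvg_cross {z : V 2 → V 2} (hz : ContDiff ℝ 1 z) {ℓ : ℝ} (hℓ : 1 ≤ ℓ) :
    ∫ x in cross ℓ, dvg z x = crossFlux z ℓ := by
  have hint : ∀ s : Set (ℝ × ℝ), IsCompact s → IntegrableOn (fun q => dvg z (toV2 q)) s :=
    fun s hs => ((continuous_dvg hz).comp toV2.continuous).continuousOn.integrableOn_compact hs
  have hcpt : ∀ a b c d : ℝ, IsCompact (Icc a b ×ˢ Icc c d) :=
    fun a b c d => isCompact_Icc.prod isCompact_Icc
  have hmeas : ∀ a b c d : ℝ, MeasurableSet (Icc a b ×ˢ Icc c d) :=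
    fun a b c d => measurableSet_Icc.prod measurableSet_Icc
  have hdisj₁ : AEDisjoint volume (Icc (-1) 1 ×ˢ Icc (-ℓ) ℓ)
      (Icc 1 ℓ ×ˢ Icc (-1) 1 ∪ Icc (-ℓ) (-1) ×ˢ Icc (-1) 1) := by
    refine measure_mono_null ?_ (ae_iff.1 ((ae_fst_ne 1).and (ae_fst_ne (-1))))
    rintro q ⟨⟨⟨h₁, h₂⟩, -⟩, ⟨⟨h₃, -⟩, -⟩ | ⟨⟨-, h₃⟩, -⟩⟩ <;>
      simp only [mem_ofPred_eq, not_and_or, not_not]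
    · exact Or.inl (le_antisymm h₂ h₃)
    · exact Or.inr (le_antisymm h₃ h₁)
  have hdisj₂ : AEDisjoint volume (Icc (1 : ℝ) ℓ ×ˢ Icc (-1 : ℝ) 1)
      (Icc (-ℓ) (-1) ×ˢ Icc (-1 : ℝ) 1) := by
    exact (disjoint_left.2 fun q h h' => by linarith [h.1.1, h'.1.2]).aedisjoint
  -- the fluxes through the interior segments `{±1} × [-1, 1]` cancel
  have hsplit : ∀ c,
      vFlux z c (-ℓ) ℓ = vFlux z c (-ℓ) (-1) + vFlux z c (-1) 1 + vFlux z c 1 ℓ := by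
    intro c
    have hii : ∀ a b, IntervalIntegrable (fun y => z (toV2 (c, y)) 0) volume a b := fun a b =>
      ((EuclideanSpace.proj 0 : V 2 →L[ℝ] ℝ).continuous.comp
        (hz.continuous.comp (toV2.continuous.comp (Continuous.prodMk_right c)))).intervalIntegrable
        _ _
    simp only [vFlux, intervalIntegral.integral_add_adjacent_intervals (hii _ _) (hii _ _)]
  rw [← setIntegral_preimage_toV2, preimage_toV2_cross hℓ,
    setIntegral_union₀ hdisj₁ ((hmeas _ _ _ _).union (hmeas _ _ _ _)).nullMeasurableSet
      (hint _ (hcpt _ _ _ _)) (hint _ ((hcpt _ _ _ _).union (hcpt _ _ _ _))),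
    setIntegral_union₀ hdisj₂ (hmeas _ _ _ _).nullMeasurableSet (hint _ (hcpt _ _ _ _))
      (hint _ (hcpt _ _ _ _)),
    integral_dvg_rectangle hz (by norm_num) (by linarith),
    integral_dvg_rectangle hz hℓ (by norm_num),
    integral_dvg_rectangle hz (by linarith) (by norm_num),
    hsplit, hsplit, crossFlux]
  ring

lemma crossFlux_le {z : V 2 → V 2} (hz : ∀ x i, |z x i| ≤ 1) {ℓ : ℝ} (hℓ : 1 ≤ ℓ) :
    crossFlux z ℓ ≤ 8 * ℓ := by
  have hor := fun {a b : ℝ} (hab : a ≤ b) c => abs_le.1 (abs_hFlux_le hz hab c)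
  have ver := fun c {a b : ℝ} (hab : a ≤ b) => abs_le.1 (abs_vFlux_le hz c hab)
  have h₁ : (-1 : ℝ) ≤ 1 := by norm_num
  have h₂ : -ℓ ≤ -1 := neg_le_neg hℓ
  unfold crossFlux
  linarith [hor h₁ ℓ, hor h₁ (-ℓ), ver ℓ h₁, ver (-ℓ) h₁, hor hℓ 1, hor hℓ (-1), hor h₂ 1,
    hor h₂ (-1), ver 1 hℓ, ver (-1) hℓ, ver 1 h₂, ver (-1) h₂]

lemma crossFlux_eq {z : V 2 → V 2} {ℓ : ℝ} (hℓ : 1 ≤ ℓ)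
    (hpos : ∀ p ∈ cross ℓ, ∀ i, 1 ≤ p i → z p i = 1)
    (hneg : ∀ p ∈ cross ℓ, ∀ i, p i ≤ -1 → z p i = -1) :
    crossFlux z ℓ = 8 * ℓ := by
  have h₁ : (-1 : ℝ) ≤ 1 := by norm_num
  have h₂ : -ℓ ≤ -1 := neg_le_neg hℓ
  rw [crossFlux, hFlux_eq (w := 1) h₁ ?_, hFlux_eq (w := -1) h₁ ?_, vFlux_eq (w := 1) h₁ ?_,
    vFlux_eq (w := -1) h₁ ?_, hFlux_eq (w := 1) hℓ ?_, hFlux_eq (w := -1) hℓ ?_,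
    hFlux_eq (w := 1) h₂ ?_, hFlux_eq (w := -1) h₂ ?_, vFlux_eq (w := 1) hℓ ?_,
    vFlux_eq (w := -1) hℓ ?_, vFlux_eq (w := 1) h₂ ?_, vFlux_eq (w := -1) h₂ ?_]
  · ring
  all_goals
    intro t ht
    rw [mem_Icc] at ht
    first | refine hpos _ ?_ _ ?_ | refine hneg _ ?_ _ ?_
    · simp only [cross, mem_ofPred_eq, toV2_apply_zero, toV2_apply_one, abs_le]
      first
      | exact Or.inl ⟨⟨by linarith, by linarith⟩, by linarith, by linarith⟩
      | exact Or.inr ⟨⟨by linarith, by linarith⟩, by linarith, by linarith⟩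
    · simp only [toV2_apply_zero, toV2_apply_one]
      linarith

lemma phi1_single (i : Fin 2) (c : ℝ) : phi1 (EuclideanSpace.single i c) = |c| := by
  fin_cases i <;> simp [phi1]

/-- The polar of the `ℓ¹` norm is the `ℓ^∞` norm. -/
lemma inner_le_phi1_iff {w : V 2} : (∀ v, ⟪w, v⟫ ≤ phi1 v) ↔ ∀ i, |w i| ≤ 1 := by
  constructor
  · intro h i
    have hp := h (EuclideanSpace.single i 1)
    have hm := h (EuclideanSpace.single i (-1))
    rw [EuclideanSpace.inner_single_right, phi1_single] at hp hm
    simp only [conj_trivial, one_mul, neg_one_mul, abs_one, abs_neg] at hp hm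
    exact abs_le.2 ⟨by linarith, hp⟩
  · intro h v
    have hterm : ∀ i, v i * w i ≤ |v i| := fun i => calc
      v i * w i ≤ |v i| * |w i| := (le_abs_self _).trans_eq (abs_mul _ _)
      _ ≤ |v i| := mul_le_of_le_one_right (abs_nonneg _) (h i)
    rw [PiLp.inner_apply, Fin.sum_univ_two, phi1]
    simp only [RCLike.inner_apply, conj_trivial]
    linarith [hterm 0, hterm 1]

lemma norm_le_phi1 (p : V 2) : ‖p‖ ≤ phi1 p := by
  have h : ‖p‖ ^ 2 ≤ phi1 p ^ 2 := by
    rw [EuclideanSpace.norm_sq_eq, Fin.sum_univ_two, phi1, Real.norm_eq_abs, Real.norm_eq_abs]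
    nlinarith [abs_nonneg (p 0), abs_nonneg (p 1)]
  exact le_of_sq_le_sq h (by unfold phi1; positivity)

lemma cross_subset_closedBall {ℓ : ℝ} (hℓ : 1 ≤ ℓ) : cross ℓ ⊆ closedBall 0 (2 * ℓ) := by
  intro p hp
  rw [mem_closedBall_zero_iff]
  refine (norm_le_phi1 p).trans ?_
  rcases hp with h | h <;> unfold phi1 <;> linarith [h.1, h.2]

def smoothClamp (t : ℝ) : ℝ := 2 * Real.smoothTransition ((t + 1) / 2) - 1

lemma contDiff_smoothClamp : ContDiff ℝ 1 smoothClamp :=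
  (contDiff_const.mul (Real.smoothTransition.contDiff.comp
    ((contDiff_id.add contDiff_const).div_const 2))).sub contDiff_const

lemma smoothClamp_of_one_le {t : ℝ} (h : 1 ≤ t) : smoothClamp t = 1 := by
  rw [smoothClamp, Real.smoothTransition.one_of_one_le (by linarith)]; ring

lemma smoothClamp_of_le_neg_one {t : ℝ} (h : t ≤ -1) : smoothClamp t = -1 := by
  rw [smoothClamp, Real.smoothTransition.zero_of_nonpos (by linarith)]; ring

lemma abs_smoothClamp_le (t : ℝ) : |smoothClamp t| ≤ 1 := by
  have h₀ := Real.smoothTransition.nonneg ((t + 1) / 2)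
  have h₁ := Real.smoothTransition.le_one ((t + 1) / 2)
  rw [smoothClamp, abs_le]
  constructor <;> linarith

def testField (b : ContDiffBump (0 : V 2)) (p : V 2) : V 2 := b p • diagField smoothClamp p

lemma testField_apply (b : ContDiffBump (0 : V 2)) (p : V 2) (i : Fin 2) :
    testField b p i = b p * smoothClamp (p i) := rfl

lemma contDiff_testField (b : ContDiffBump (0 : V 2)) : ContDiff ℝ 1 (testField b) :=
  b.contDiff.smul (contDiff_diagField contDiff_smoothClamp)

lemma abs_testField_apply_le (b : ContDiffBump (0 : V 2)) (p : V 2) (i : Fin 2) :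
    |testField b p i| ≤ 1 := by
  rw [testField_apply, abs_mul, abs_of_nonneg b.nonneg]
  exact mul_le_one₀ b.le_one (abs_nonneg _) (abs_smoothClamp_le _)

lemma crossFlux_testField {ℓ : ℝ} (hℓ : 1 ≤ ℓ) (b : ContDiffBump (0 : V 2))
    (hb : cross ℓ ⊆ closedBall 0 b.rIn) : crossFlux (testField b) ℓ = 8 * ℓ := by
  have hfield : ∀ p ∈ cross ℓ, ∀ i, testField b p i = smoothClamp (p i) := fun p hp i => by
    rw [testField_apply, b.one_of_mem_closedBall (hb hp), one_mul]
  exact crossFlux_eq hℓ (fun p hp i h => by rw [hfield p hp, smoothClamp_of_one_le h])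
    (fun p hp i h => by rw [hfield p hp, smoothClamp_of_le_neg_one h])

lemma setIntegral_univ_indicator_one_mul {α : Type*} [MeasurableSpace α] {μ : Measure α}
    {s : Set α} (hs : MeasurableSet s) (g : α → ℝ) :
    ∫ x in univ, s.indicator 1 x * g x ∂μ = ∫ x in s, g x ∂μ := by
  rw [Measure.restrict_univ, ← integral_indicator hs]
  congr with x
  by_cases hx : x ∈ s <;> simp [hx]

lemma anisoPer_cross {ℓ : ℝ} (hℓ : 1 ≤ ℓ) : anisoPer phi1 univ (cross ℓ) = 8 * ℓ := by
  let b : ContDiffBump (0 : V 2) := ⟨2 * ℓ, 2 * ℓ + 1, by linarith, by linarith⟩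
  refine IsGreatest.csSup_eq ⟨⟨testField b, contDiff_testField b,
    b.hasCompactSupport.smul_right, subset_univ _,
    fun x => inner_le_phi1_iff.2 (abs_testField_apply_le b x), ?_⟩, ?_⟩
  · rw [setIntegral_univ_indicator_one_mul (measurableSet_cross ℓ),
      integral_dvg_cross (contDiff_testField b) hℓ, crossFlux_testField hℓ b
      (cross_subset_closedBall hℓ)]
  · rintro r ⟨z, hz, -, -, hφ, rfl⟩
    rw [setIntegral_univ_indicator_one_mul (measurableSet_cross ℓ), integral_dvg_cross hz hℓ]
    exact crossFlux_le (fun x => inner_le_phi1_iff.1 (hφ x)) hℓ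

lemma abs_clamp_le (t : ℝ) : |clamp t| ≤ 1 :=
  abs_le.2 ⟨le_max_left _ _, max_le (by norm_num) (min_le_left _ _)⟩

lemma clamp_of_abs_le {t : ℝ} (h : |t| ≤ 1) : clamp t = t := by
  rw [clamp, min_eq_right (abs_le.1 h).2, max_eq_right (abs_le.1 h).1]

lemma clamp_of_one_le {t : ℝ} (h : 1 ≤ t) : clamp t = 1 := by
  rw [clamp, min_eq_left h, max_eq_right (by norm_num)]

lemma clamp_of_le_neg_one {t : ℝ} (h : t ≤ -1) : clamp t = -1 := by
  rw [clamp, min_eq_right (h.trans (by norm_num)), max_eq_left h]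

lemma hasDerivAt_clamp_of_abs_lt {t : ℝ} (h : |t| < 1) : HasDerivAt clamp 1 t := by
  refine (hasDerivAt_id t).congr_of_eventuallyEq ?_
  filter_upwards [Ioo_mem_nhds (abs_lt.1 h).1 (abs_lt.1 h).2] with s hs
  exact clamp_of_abs_le (abs_le.2 ⟨hs.1.le, hs.2.le⟩)

lemma hasDerivAt_clamp_of_one_lt_abs {t : ℝ} (h : 1 < |t|) : HasDerivAt clamp 0 t := by
  rcases lt_abs.1 h with h | h
  · refine (hasDerivAt_const t 1).congr_of_eventuallyEq ?_
    filter_upwards [Ioi_mem_nhds h] with s hs using clamp_of_one_le hs.le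
  · refine (hasDerivAt_const t (-1)).congr_of_eventuallyEq ?_
    filter_upwards [Iio_mem_nhds (lt_neg.1 h)] with s hs using clamp_of_le_neg_one hs.le

lemma hasDerivAt_clamp {t : ℝ} (h : |t| ≠ 1) :
    HasDerivAt clamp (if |t| < 1 then 1 else 0) t := by
  split_ifs with h'
  · exact hasDerivAt_clamp_of_abs_lt h'
  · exact hasDerivAt_clamp_of_one_lt_abs (lt_of_le_of_ne (not_lt.1 h') h.symm)

lemma dvg_zfield {p : V 2} (h₀ : |p 0| ≠ 1) (h₁ : |p 1| ≠ 1) :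
    dvg zfield p = (if |p 0| < 1 then 1 else 0) + (if |p 1| < 1 then 1 else 0) := by
  rw [← Fin.sum_univ_two (fun i => if |p i| < 1 then (1 : ℝ) else 0)]
  exact dvg_diagField (Fin.forall_fin_two.2 ⟨hasDerivAt_clamp h₀, hasDerivAt_clamp h₁⟩)

lemma integral_dvg_zfield_cross {ℓ : ℝ} (hℓ : 1 ≤ ℓ) :
    ∫ x in cross ℓ, dvg zfield x = 8 * ℓ := by
  set S := toV2 ⁻¹' cross ℓ
  have hae : ∀ᵐ q : ℝ × ℝ, dvg zfield (toV2 q) =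
      (Ioo (-1) 1 ×ˢ univ).indicator 1 q + (univ ×ˢ Ioo (-1) 1).indicator 1 q := by
    filter_upwards [ae_fst_ne 1, ae_fst_ne (-1), ae_snd_ne 1, ae_snd_ne (-1)] with q h₁ h₂ h₃ h₄
    rw [dvg_zfield (by simpa [abs_eq] using ⟨h₁, h₂⟩) (by simpa [abs_eq] using ⟨h₃, h₄⟩)]
    simp [indicator_apply, abs_lt]
  have hS : IsCompact S := by
    simp only [S, preimage_toV2_cross hℓ]
    exact (isCompact_Icc.prod isCompact_Icc).union
      ((isCompact_Icc.prod isCompact_Icc).union (isCompact_Icc.prod isCompact_Icc))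
  have hint : ∀ C : Set (ℝ × ℝ), MeasurableSet C → IntegrableOn (C.indicator 1) S := fun C hC =>
    (integrableOn_const (C := (1 : ℝ)) hS.measure_lt_top.ne).indicator hC
  have hS₀ : S ∩ Ioo (-1) 1 ×ˢ univ = Ioo (-1) 1 ×ˢ Icc (-ℓ) ℓ := by
    ext ⟨x, y⟩
    simp only [S, cross, mem_inter_iff, mem_preimage, mem_ofPred_eq, toV2_apply_zero,
      toV2_apply_one, mem_prod, mem_Ioo, mem_Icc, mem_univ, and_true, abs_le]
    constructor
    · rintro ⟨h | h, hx⟩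
      · exact ⟨hx, h.2⟩
      · exact ⟨hx, by linarith [h.2.1], by linarith [h.2.2]⟩
    · rintro ⟨hx, hy⟩
      exact ⟨Or.inl ⟨⟨hx.1.le, hx.2.le⟩, hy⟩, hx⟩
  have hS₁ : S ∩ univ ×ˢ Ioo (-1) 1 = Icc (-ℓ) ℓ ×ˢ Ioo (-1) 1 := by
    ext ⟨x, y⟩
    simp only [S, cross, mem_inter_iff, mem_preimage, mem_ofPred_eq, toV2_apply_zero,
      toV2_apply_one, mem_prod, mem_Ioo, mem_Icc, mem_univ, true_and, abs_le]
    constructor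
    · rintro ⟨h | h, hy⟩
      · exact ⟨⟨by linarith [h.1.1], by linarith [h.1.2]⟩, hy⟩
      · exact ⟨h.1, hy⟩
    · rintro ⟨hx, hy⟩
      exact ⟨Or.inr ⟨hx, hy.1.le, hy.2.le⟩, hy⟩
  rw [← setIntegral_preimage_toV2, setIntegral_congr_ae ((measurableSet_cross ℓ).preimage
      toV2.continuous.measurable) (hae.mono fun q h _ => h),
    integral_add (hint _ (measurableSet_Ioo.prod MeasurableSet.univ))
      (hint _ (MeasurableSet.univ.prod measurableSet_Ioo)),
    setIntegral_indicator (measurableSet_Ioo.prod MeasurableSet.univ),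
    setIntegral_indicator (MeasurableSet.univ.prod measurableSet_Ioo), hS₀, hS₁]
  simp only [Pi.one_apply, setIntegral_const, Measure.volume_eq_prod, measureReal_prod_prod,
    Real.volume_real_Ioo, Real.volume_real_Icc, smul_eq_mul, mul_one]
  rw [max_eq_left (by norm_num), max_eq_left (by linarith)]
  ring

theorem cross_calibration_general (L : ℝ) :
    (∀ p ∈ cross L, |zfield p 0| ≤ 1 ∧ |zfield p 1| ≤ 1) ∧
    (∀ p : V 2,
      ((|p 0| < 1 ∧ |p 1| < 1) → dvg zfield p = 2) ∧
      ((|p 0| < 1 ∧ 1 < |p 1| ∧ |p 1| < L) → dvg zfield p = 1) ∧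
      ((1 < |p 0| ∧ |p 0| < L ∧ |p 1| < 1) → dvg zfield p = 1)) ∧
    (∀ ℓ : ℝ, 1 ≤ ℓ → ℓ ≤ L →
      anisoPer phi1 univ (cross ℓ) = ∫ x in cross ℓ, dvg zfield x) := by
  refine ⟨fun p _ => ⟨abs_clamp_le _, abs_clamp_le _⟩, fun p => ⟨?_, ?_, ?_⟩,
    fun ℓ hℓ _ => by rw [anisoPer_cross hℓ, integral_dvg_zfield_cross hℓ]⟩
  · rintro ⟨h₀, h₁⟩
    rw [dvg_zfield h₀.ne h₁.ne, if_pos h₀, if_pos h₁]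
    norm_num
  · rintro ⟨h₀, h₁, -⟩
    rw [dvg_zfield h₀.ne h₁.ne', if_pos h₀, if_neg h₁.le.not_gt]
    norm_num
  · rintro ⟨h₀, -, h₁⟩
    rw [dvg_zfield h₀.ne' h₁.ne, if_neg h₀.le.not_gt, if_pos h₁]
    norm_num

/-- The calibration of the cross: (i) `z` takes values in the
unit ball `[−1,1]²` of `ψ°` on `E_L`; (ii) `div z = 1 + χ_{[−1,1]²}` in the
interior of each region; (iii) for `1 ≤ ℓ ≤ L`,
`P_φ(E_ℓ) = ∫_{∂E_ℓ} z·ν dH¹ (= ∫_{E_ℓ} div z dx)`. -/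
theorem cross_calibration (L : ℝ) (hL : 1 < L) :
    (∀ p ∈ cross L, |zfield p 0| ≤ 1 ∧ |zfield p 1| ≤ 1) ∧
    (∀ p : V 2,
      ((|p 0| < 1 ∧ |p 1| < 1) → dvg zfield p = 2) ∧
      ((|p 0| < 1 ∧ 1 < |p 1| ∧ |p 1| < L) → dvg zfield p = 1) ∧
      ((1 < |p 0| ∧ |p 0| < L ∧ |p 1| < 1) → dvg zfield p = 1)) ∧
    (∀ ℓ : ℝ, 1 ≤ ℓ → ℓ ≤ L →
      anisoPer phi1 univ (cross ℓ) = ∫ x in cross ℓ, dvg zfield x) :=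
  cross_calibration_general L
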